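/- arXiv:1507.02942 — 3 statements merged into one kernel-verified Lean document; each statement's English description precedes it below -/
import Mathlib

section
/- Let p be a prime and let G be a finite p-group of exponent p^e that can be generated by two elements. Suppose that (i) the set of all elements of G of order at most p^{e-1} is contained in the union of two maximal subgroups of G, and (ii) |G^{p^{e-1}}| = p. Then G is not a Beauville group. -/
open Subgroup

/-- `Σ(x,y)`: the union of all conjugates of the cyclic subgroups `⟨x⟩`, `⟨y⟩`, `⟨xy⟩`. -/
def SigmaSet {G : Type*} [Group G] (x y : G) : Set G :=
  ⋃ g : G, ((zpowers (g * x * g⁻¹) : Set G) ∪ (zpowers (g * y * g⁻¹) : Set G) ∪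
    (zpowers (g * (x * y) * g⁻¹) : Set G))

/-- An (unmixed) Beauville structure on `G`. -/
def IsBeauvilleStructure {G : Type*} [Group G] (x₁ y₁ x₂ y₂ : G) : Prop :=
  closure {x₁, y₁} = ⊤ ∧ closure {x₂, y₂} = ⊤ ∧
    SigmaSet x₁ y₁ ∩ SigmaSet x₂ y₂ = {1}

/-- `G` is a Beauville group if it admits a Beauville structure. -/
def IsBeauvilleGroup (G : Type*) [Group G] : Prop :=
  ∃ x₁ y₁ x₂ y₂ : G, IsBeauvilleStructure x₁ y₁ x₂ y₂

/-- `G^n`: the subgroup generated by all `n`-th powers of elements of `G`. -/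
def powSubgroup (G : Type*) [Group G] (n : ℕ) : Subgroup G :=
  closure (Set.range fun g : G => g ^ n)

private lemma both_in_max {G : Type*} [Group G] {M : Subgroup G} {x y : G}
    (hM : IsCoatom M) (hx : x ∈ M) (hy : y ∈ M) (hgen : closure ({x, y} : Set G) = ⊤) :
    False := by
  apply hM.1
  rw [← top_le_iff, ← hgen]
  exact closure_le M |>.mpr (by rintro z (rfl | rfl) <;> simpa)

private lemma exists_big_order {m : ℕ} {G : Type*} [Group G]
    {M₁ M₂ : Subgroup G} (hM₁ : IsCoatom M₁) (hM₂ : IsCoatom M₂)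
    (hsub : {g : G | orderOf g ≤ m} ⊆ (M₁ : Set G) ∪ (M₂ : Set G))
    {x y : G} (hgen : closure ({x, y} : Set G) = ⊤) :
    ∃ z ∈ ({x, y, x * y} : Set G), ¬ orderOf z ≤ m := by
  by_contra h
  push_neg at h
  have hx := hsub (h x (by simp))
  have hy := hsub (h y (by simp))
  have hxy := hsub (h (x * y) (by simp))
  have key : ∀ M : Subgroup G, IsCoatom M → x ∈ M → x * y ∈ M → False := by
    intro M hM hxM hxyM
    exact both_in_max hM hxM (by simpa using M.mul_mem (M.inv_mem hxM) hxyM) hgen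
  rcases hx with hx | hx <;> rcases hy with hy | hy
  · exact both_in_max hM₁ hx hy hgen
  · rcases hxy with hxy | hxy
    · exact key M₁ hM₁ hx hxy
    · exact both_in_max hM₂ (by simpa using M₂.mul_mem hxy (M₂.inv_mem hy)) hy hgen
  · rcases hxy with hxy | hxy
    · exact both_in_max hM₁ (by simpa using M₁.mul_mem hxy (M₁.inv_mem hy)) hy hgen
    · exact key M₂ hM₂ hx hxy
  · exact both_in_max hM₂ hx hy hgen

private lemma pow_mem_sigma {G : Type*} [Group G] {x y z : G}
    (hz : z ∈ ({x, y, x * y} : Set G)) (n : ℕ) : z ^ n ∈ SigmaSet x y := by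
  have hmem : z ^ n ∈ (zpowers z : Set G) := (zpowers z).pow_mem (mem_zpowers z) n
  apply Set.mem_iUnion.mpr ⟨1, ?_⟩
  simp only [one_mul, inv_one, mul_one]
  rcases hz with rfl | rfl | rfl
  · exact Or.inl (Or.inl hmem)
  · exact Or.inl (Or.inr hmem)
  · exact Or.inr hmem

theorem not_beauville_of_omega_in_two_maximals
    {p e : ℕ} (hp : p.Prime) (G : Type*) [Group G] [Finite G]
    (hpG : IsPGroup p G)
    (h2gen : ∃ a b : G, closure ({a, b} : Set G) = ⊤)
    (hexp : Monoid.exponent G = p ^ e)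
    (hmax : ∃ M₁ M₂ : Subgroup G, IsCoatom M₁ ∧ IsCoatom M₂ ∧
      {g : G | orderOf g ≤ p ^ (e - 1)} ⊆ (M₁ : Set G) ∪ (M₂ : Set G))
    (hcard : Nat.card (powSubgroup G (p ^ (e - 1))) = p) :
    ¬ IsBeauvilleGroup G := by
  rintro ⟨x₁, y₁, x₂, y₂, hgen₁, hgen₂, hinter⟩
  obtain ⟨M₁, M₂, hM₁, hM₂, hsub⟩ := hmax
  set n := p ^ (e - 1) with hn
  have hnpos : 0 < n := pow_pos hp.pos _
  obtain ⟨z₁, hz₁mem, hz₁⟩ := exists_big_order hM₁ hM₂ hsub hgen₁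
  obtain ⟨z₂, hz₂mem, hz₂⟩ := exists_big_order hM₁ hM₂ hsub hgen₂
  have hne : ∀ z : G, ¬ orderOf z ≤ n → z ^ n ≠ 1 := by
    intro z hz h1
    exact hz (Nat.le_of_dvd hnpos (orderOf_dvd_of_pow_eq_one h1))
  -- z₁ ^ n and z₂ ^ n are nontrivial elements of a subgroup of prime order
  have hmemK : ∀ z : G, z ^ n ∈ powSubgroup G n := fun z =>
    subset_closure ⟨z, rfl⟩
  have hK2 : powSubgroup G n = zpowers (z₂ ^ n) := by
    refine (Subgroup.eq_of_le_of_card_ge ?_ ?_).symm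
    · exact (zpowers_le).mpr (hmemK z₂)
    · rw [hcard, Nat.card_zpowers]
      have hdvd : orderOf (z₂ ^ n) ∣ p := by
        rw [← hcard, ← Nat.card_zpowers]
        exact Subgroup.card_dvd_of_le ((zpowers_le).mpr (hmemK z₂))
      rcases (Nat.dvd_prime hp).mp hdvd with h | h
      · exact absurd (orderOf_eq_one_iff.mp h) (hne z₂ hz₂)
      · exact h.ge
  have hkey : z₁ ^ n ∈ zpowers (z₂ ^ n) := hK2 ▸ hmemK z₁
  have h1 : z₁ ^ n ∈ SigmaSet x₁ y₁ := pow_mem_sigma hz₁mem n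
  have hz2pow : z₁ ^ n ∈ (zpowers z₂ : Set G) := by
    obtain ⟨k, hk⟩ := hkey
    refine ⟨(n : ℤ) * k, ?_⟩
    show z₂ ^ ((n : ℤ) * k) = z₁ ^ n
    rw [zpow_mul, zpow_natCast]; exact hk
  have h2 : z₁ ^ n ∈ SigmaSet x₂ y₂ := by
    apply Set.mem_iUnion.mpr ⟨1, ?_⟩
    simp only [one_mul, inv_one, mul_one]
    rcases hz₂mem with rfl | rfl | rfl
    · exact Or.inl (Or.inl hz2pow)
    · exact Or.inl (Or.inr hz2pow)
    · exact Or.inr hz2pow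
  have : z₁ ^ n = 1 := by
    have := hinter ▸ Set.mem_inter h1 h2
    simpa using this
  exact hne z₁ hz₁ this
end

section
/- For every prime p ≥ 5 and every positive integer C, there exists a finite p-group G that can be generated by two elements, with |G| > C, such that, writing exp G = p^e, one has |G^{p^{e-1}}| ≥ p^2 and G is not a Beauville group. (Hence the 'if' implication of the criterion 'G is Beauville iff p ≥ 5 and |G^{p^{e-1}}| ≥ p^2' fails for infinitely many 2-generator p-groups.) -/
/-!
Take `W = ℤ/p^(m+2) ≀ ℤ/p` and `G = W/L`, where `L` consists of the base vectors whose
coordinates sum to `0` and are all killed by `p`.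

If `x ∈ W` has nontrivial top component, then `x^p` is the constant vector `(s, …, s)`, `s` the
coordinate sum of `x`. Modulo `L`, `x^(p^(m+1))` is therefore `φ(s)`, where `φ(d)` is the image of
the constant vector `p^m d`; `φ` kills `p ℤ/p^(m+2)`, so when `s` is a unit, `⟨x⟩` contains
`z = φ(1) ≠ 1`. The top component and the coordinate sum mod `p` are two nontrivial
homomorphisms `G → ℤ/p`, so for every generating pair `x, y` one of `x`, `y`, `xy` is nontrivial
under both, whence `z ∈ Σ(x, y)`: no two generating pairs have `Σ`'s meeting trivially.

The base generator `a` has order `p^(m+2) = exp G`, and `G^(p^(m+1))` contains `z` and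
`a^(p^(m+1)) ∉ ⟨z⟩`; being a `p`-group, it has order at least `p^2`. Taking `m` large makes `G`
as large as we like.
-/

open Subgroup

namespace RegularWreathProduct

variable {D Q : Type*} [CommGroup D] [Group Q]

def ofLeft : (Q → D) →* D ≀ᵣ Q where
  toFun f := ⟨f, 1⟩
  map_one' := rfl
  map_mul' f g := by ext <;> simp

@[simp] lemma left_ofLeft (f : Q → D) : (ofLeft f).left = f := rfl

@[simp] lemma right_ofLeft (f : Q → D) : (ofLeft f).right = 1 := rfl

lemma ofLeft_mul_inl (x : D ≀ᵣ Q) : ofLeft x.left * inl x.right = x := by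
  ext <;> simp

lemma ofLeft_left_of_right_eq_one {x : D ≀ᵣ Q} (hx : x.right = 1) : ofLeft x.left = x := by
  simpa [hx] using ofLeft_mul_inl x

lemma mul_ofLeft_mul_inv (g : D ≀ᵣ Q) (f : Q → D) :
    g * ofLeft f * g⁻¹ = ofLeft fun q => f (g.right⁻¹ * q) := by
  ext q
  · simp [mul_comm (g.left q)]
  · simp

lemma right_pow (x : D ≀ᵣ Q) (n : ℕ) : (x ^ n).right = x.right ^ n :=
  map_pow rightHom x n

lemma left_pow (x : D ≀ᵣ Q) (n : ℕ) (q : Q) :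
    (x ^ n).left q = ∏ i ∈ Finset.range n, x.left ((x.right ^ i)⁻¹ * q) := by
  induction n with
  | zero => simp
  | succ n ih => simp [pow_succ, ih, Finset.prod_range_succ, right_pow]

lemma closure_ofLeft_mulSingle_inl_eq_top [DecidableEq Q] [Finite Q] {g : D} {r : Q}
    (hg : ∀ d, d ∈ zpowers g) (hr : ∀ q, q ∈ zpowers r) :
    closure {ofLeft (Pi.mulSingle 1 g), inl r} = ⊤ := by
  set H := closure {ofLeft (Pi.mulSingle 1 g), inl r}
  have h_inl (q : Q) : inl q ∈ H := by
    obtain ⟨k, rfl⟩ := mem_zpowers_iff.mp (hr q)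
    rw [map_zpow]
    exact zpow_mem (subset_closure (by simp)) k
  have h_single (q : Q) (d : D) : ofLeft (Pi.mulSingle q d) ∈ H := by
    obtain ⟨k, rfl⟩ := mem_zpowers_iff.mp (hg d)
    have hconj : ofLeft (Pi.mulSingle q (g ^ k)) =
        (inl q * ofLeft (Pi.mulSingle 1 g) * (inl q)⁻¹) ^ k := by
      rw [mul_ofLeft_mul_inv, ← map_zpow]
      congr 1
      funext x
      simp [Pi.mulSingle_apply, inv_mul_eq_one, eq_comm]
    rw [hconj]
    exact zpow_mem (mul_mem (mul_mem (h_inl q) (subset_closure (by simp))) (inv_mem (h_inl q))) k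
  have h_ofLeft (f : Q → D) : ofLeft f ∈ H := by
    cases nonempty_fintype Q
    rw [← Finset.univ_prod_mulSingle f]
    refine Finset.prod_induction _ (fun f => ofLeft f ∈ H) (fun _ _ ha hb => ?_) ?_
      fun q _ => h_single q (f q)
    · rw [map_mul]
      exact mul_mem ha hb
    · rw [map_one]
      exact one_mem H
  refine eq_top_iff.mpr fun x _ => ?_
  rw [← ofLeft_mul_inl x]
  exact mul_mem (h_ofLeft _) (h_inl _)

variable [Fintype Q]

def prodLeft : D ≀ᵣ Q →* D where
  toFun x := ∏ q, x.left q
  map_one' := by simp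
  map_mul' x y := by
    simp only [mul_left, Pi.mul_apply, Finset.prod_mul_distrib]
    congr 1
    exact Equiv.prod_comp (Equiv.mulLeft x.right⁻¹) y.left

@[simp] lemma prodLeft_apply (x : D ≀ᵣ Q) : prodLeft x = ∏ q, x.left q := rfl

lemma pow_card_eq_ofLeft (x : D ≀ᵣ Q) (hx : ∀ q, q ∈ zpowers x.right) :
    x ^ Fintype.card Q = ofLeft fun _ => prodLeft x := by
  classical
  ext q
  · have hcard : orderOf x.right = Fintype.card Q := by
      rw [orderOf_eq_card_of_forall_mem_zpowers hx, Nat.card_eq_fintype_card]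
    have hinj : Set.InjOn (x.right ^ ·) (Finset.range (orderOf x.right)) := by
      rw [Finset.coe_range]
      exact pow_injOn_Iio_orderOf
    rw [left_pow, left_ofLeft, prodLeft_apply, ← hcard,
      ← Finset.prod_image (f := fun y => x.left (y⁻¹ * q)) hinj, IsCyclic.image_range_orderOf hx]
    exact Equiv.prod_comp ((Equiv.inv Q).trans (Equiv.mulRight q)) x.left
  · simp [right_pow, pow_card_eq_one]

lemma pow_card_mul_eq_ofLeft (x : D ≀ᵣ Q) (hx : ∀ q, q ∈ zpowers x.right) (n : ℕ) :
    x ^ (Fintype.card Q * n) = ofLeft fun _ => prodLeft x ^ n := by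
  rw [pow_mul, pow_card_eq_ofLeft x hx, ← map_pow]
  rfl

def torsionKernel (n : ℕ) : Subgroup (D ≀ᵣ Q) where
  carrier := {x | x.right = 1 ∧ prodLeft x = 1 ∧ ∀ q, x.left q ^ n = 1}
  one_mem' := by simp
  mul_mem' := by
    rintro x y ⟨hx, hxp, hxn⟩ ⟨hy, hyp, hyn⟩
    refine ⟨by simp [hx, hy], by rw [map_mul, hxp, hyp, one_mul], fun q => ?_⟩
    simp [hx, mul_pow, hxn, hyn]
  inv_mem' := by
    rintro x ⟨hx, hxp, hxn⟩
    exact ⟨by simp [hx], by rw [map_inv, hxp, inv_one], fun q => by simp [hx, hxn]⟩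

lemma ofLeft_mem_torsionKernel {n : ℕ} {f : Q → D} :
    ofLeft f ∈ torsionKernel n ↔ ∏ q, f q = 1 ∧ ∀ q, f q ^ n = 1 :=
  and_iff_right rfl

instance (n : ℕ) : (torsionKernel (D := D) (Q := Q) n).Normal where
  conj_mem x hx g := by
    obtain ⟨f, rfl⟩ : ∃ f, ofLeft f = x := ⟨_, ofLeft_left_of_right_eq_one hx.1⟩
    rw [ofLeft_mem_torsionKernel] at hx
    rw [mul_ofLeft_mul_inv, ofLeft_mem_torsionKernel]
    exact ⟨(Equiv.prod_comp (Equiv.mulLeft g.right⁻¹) f).trans hx.1, fun q => hx.2 _⟩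

end RegularWreathProduct

section

variable {G : Type*} [Group G]

lemma mem_sigmaSet_of_mem_zpowers {x y u z : G} (hu : u ∈ ({x, y, x * y} : Set G))
    (hz : z ∈ zpowers u) : z ∈ SigmaSet x y := by
  refine Set.mem_iUnion.mpr ⟨1, ?_⟩
  simp only [one_mul, inv_one, mul_one]
  rcases hu with rfl | rfl | rfl
  · exact Or.inl (Or.inl hz)
  · exact Or.inl (Or.inr hz)
  · exact Or.inr hz

lemma not_isBeauvilleGroup_of_forall_mem_sigmaSet {z : G} (hz : z ≠ 1)
    (h : ∀ x y : G, closure {x, y} = ⊤ → z ∈ SigmaSet x y) : ¬ IsBeauvilleGroup G := by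
  rintro ⟨x₁, y₁, x₂, y₂, h₁, h₂, hdisj⟩
  exact hz (hdisj ▸ ⟨h x₁ y₁ h₁, h x₂ y₂ h₂⟩ : z ∈ ({1} : Set G))

lemma map_ne_one_of_closure_pair_eq_top {H : Type*} [Group H] {x y : G}
    (hxy : closure {x, y} = ⊤) (φ : G →* H) {g : G} (hg : φ g ≠ 1) : φ x ≠ 1 ∨ φ y ≠ 1 := by
  by_contra! h
  have : closure {x, y} ≤ φ.ker := closure_le _ |>.mpr <| by
    rintro _ (rfl | rfl)
    exacts [h.1, h.2]
  exact hg (this (hxy ▸ mem_top g))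

lemma exists_mem_triple_map_ne_one_and_map_ne_one {H₁ H₂ : Type*} [Group H₁] [Group H₂]
    (φ : G →* H₁) (ψ : G →* H₂) {x y : G} (hφ : φ x ≠ 1 ∨ φ y ≠ 1) (hψ : ψ x ≠ 1 ∨ ψ y ≠ 1) :
    ∃ u ∈ ({x, y, x * y} : Set G), φ u ≠ 1 ∧ ψ u ≠ 1 := by
  by_cases hx : φ x ≠ 1 ∧ ψ x ≠ 1
  · exact ⟨x, by simp, hx⟩
  by_cases hy : φ y ≠ 1 ∧ ψ y ≠ 1
  · exact ⟨y, by simp, hy⟩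
  refine ⟨x * y, by simp, ?_⟩
  simp only [map_mul]
  by_cases hφx : φ x = 1 <;> by_cases hψx : ψ x = 1 <;> simp_all

lemma sq_le_card_of_notMem_zpowers {p : ℕ} [Fact p.Prime] [Finite G] (hG : IsPGroup p G)
    {H : Subgroup G} {z w : G} (hz : z ≠ 1) (hzH : z ∈ H) (hwH : w ∈ H) (hw : w ∉ zpowers z) :
    p ^ 2 ≤ Nat.card H := by
  have hp := (Fact.out : p.Prime)
  obtain ⟨k, hk⟩ := IsPGroup.iff_card.mp (hG.to_subgroup H)
  obtain ⟨j, hj⟩ := IsPGroup.iff_card.mp (hG.to_subgroup (zpowers z))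
  have hle : zpowers z ≤ H := zpowers_le.mpr hzH
  have hne : Nat.card (zpowers z) ≠ Nat.card H :=
    fun h => hw (eq_of_le_of_card_ge hle h.ge ▸ hwH)
  have hj0 : j ≠ 0 := by
    rintro rfl
    rw [Nat.card_zpowers, pow_zero, orderOf_eq_one_iff] at hj
    exact hz hj
  have hjk : j ≤ k :=
    (Nat.pow_dvd_pow_iff_le_right hp.one_lt).mp (hj ▸ hk ▸ card_dvd_of_le hle)
  have hjk' : j ≠ k := by
    rintro rfl
    exact hne (hj.trans hk.symm)
  exact hk ▸ Nat.pow_le_pow_right hp.pos (by omega)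

end

namespace ZMod

lemma mem_zpowers_ofAdd_one {n : ℕ} [NeZero n] (d : Multiplicative (ZMod n)) :
    d ∈ zpowers (Multiplicative.ofAdd 1) :=
  mem_zpowers_iff.mpr ⟨d.toAdd.val, by simp [← ofAdd_zsmul]⟩

lemma ofAdd_one_mem_zpowers_of_isUnit {n : ℕ} {u : ZMod n} (hu : IsUnit u) :
    Multiplicative.ofAdd 1 ∈ zpowers (Multiplicative.ofAdd u) := by
  obtain ⟨v, rfl⟩ := hu
  refine mem_zpowers_iff.mpr ⟨((v⁻¹ : (ZMod n)ˣ) : ZMod n).cast, ?_⟩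
  rw [← ofAdd_zsmul, zsmul_eq_mul, intCast_cast, cast_id', id, Units.inv_mul]

lemma isUnit_of_castHom_ne_zero {p k : ℕ} (hp : p.Prime) (hk : k ≠ 0) {u : ZMod (p ^ k)}
    (hu : castHom (dvd_pow_self p hk) (ZMod p) u ≠ 0) : IsUnit u := by
  have : NeZero (p ^ k) := ⟨pow_ne_zero _ hp.ne_zero⟩
  rw [← natCast_zmod_val u, isUnit_natCast_iff_not_dvd_pow hp (Nat.pos_of_ne_zero hk),
    ← natCast_eq_zero_iff]
  rwa [castHom_apply, cast_eq_val] at hu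

end ZMod

open RegularWreathProduct

namespace WreathQuotient

abbrev Cyclic (n : ℕ) := Multiplicative (ZMod n)

abbrev Wreath (p m : ℕ) := Cyclic (p ^ (m + 2)) ≀ᵣ Cyclic p

end WreathQuotient

abbrev WreathQuotient (p m : ℕ) [NeZero p] :=
  WreathQuotient.Wreath p m ⧸ (torsionKernel p : Subgroup (WreathQuotient.Wreath p m))

namespace WreathQuotient

variable {p m : ℕ}

lemma card_cyclic (n : ℕ) [NeZero n] : Fintype.card (Cyclic n) = n := by simp

lemma cyclic_pow_eq_one {n : ℕ} [NeZero n] (d : Cyclic n) : d ^ n = 1 := by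
  simpa using pow_card_eq_one (x := d)

def gen : Cyclic (p ^ (m + 2)) := Multiplicative.ofAdd 1

lemma orderOf_gen : orderOf (gen : Cyclic (p ^ (m + 2))) = p ^ (m + 2) := by
  rw [gen, orderOf_ofAdd_eq_addOrderOf, ZMod.addOrderOf_one]

lemma gen_pow_ne_one (hp : 1 < p) : (gen : Cyclic (p ^ (m + 2))) ^ p ^ (m + 1) ≠ 1 :=
  pow_ne_one_of_lt_orderOf (pow_pos (by omega) _).ne'
    (by rw [orderOf_gen]; exact Nat.pow_lt_pow_right hp (by omega))

def reduce : Cyclic (p ^ (m + 2)) →* Cyclic p :=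
  AddMonoidHom.toMultiplicative (ZMod.castHom (dvd_pow_self p (by omega)) (ZMod p)).toAddMonoidHom

lemma gen_mem_zpowers_of_reduce_ne_one (hp : p.Prime) {d : Cyclic (p ^ (m + 2))}
    (hd : reduce d ≠ 1) : gen ∈ zpowers d :=
  ZMod.ofAdd_one_mem_zpowers_of_isUnit (ZMod.isUnit_of_castHom_ne_zero hp (by omega) hd)

variable [Fact p.Prime]

def mk : Wreath p m →* WreathQuotient p m := QuotientGroup.mk' _

lemma mk_surjective : Function.Surjective (mk (p := p) (m := m)) :=
  QuotientGroup.mk'_surjective _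

lemma mk_ofLeft_eq_one_iff {f : Cyclic p → Cyclic (p ^ (m + 2))} :
    mk (ofLeft f) = 1 ↔ ∏ q, f q = 1 ∧ ∀ q, f q ^ p = 1 :=
  (QuotientGroup.eq_one_iff _).trans ofLeft_mem_torsionKernel

def rightQ : WreathQuotient p m →* Cyclic p :=
  QuotientGroup.lift _ rightHom fun _ hx => hx.1

def prodQ : WreathQuotient p m →* Cyclic (p ^ (m + 2)) :=
  QuotientGroup.lift _ prodLeft fun _ hx => hx.2.1

@[simp] lemma rightQ_mk (x : Wreath p m) : rightQ (mk x) = x.right := rfl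

@[simp] lemma prodQ_mk (x : Wreath p m) : prodQ (mk x) = prodLeft x := rfl

def central : Cyclic (p ^ (m + 2)) →* WreathQuotient p m :=
  mk.comp (ofLeft.comp ((Pi.constMonoidHom _ _).comp (powMonoidHom (p ^ m))))

lemma central_apply (d : Cyclic (p ^ (m + 2))) : central d = mk (ofLeft fun _ => d ^ p ^ m) :=
  rfl

lemma central_pow_prime (d : Cyclic (p ^ (m + 2))) : central d ^ p = 1 := by
  have h : ((d ^ p) ^ p ^ m) ^ p = 1 := by
    rw [← pow_mul, ← pow_mul, show p * (p ^ m * p) = p ^ (m + 2) by ring, cyclic_pow_eq_one]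
  rw [← map_pow, central_apply, mk_ofLeft_eq_one_iff, Finset.prod_const, Finset.card_univ,
    card_cyclic]
  exact ⟨h, fun _ => h⟩

lemma mk_pow_eq_central {x : Wreath p m} (hx : x.right ≠ 1) :
    mk x ^ p ^ (m + 1) = central (prodLeft x) := by
  have hgen (q : Cyclic p) : q ∈ zpowers x.right :=
    mem_zpowers_of_prime_card (p := p) (by simp) hx
  have hexp : p ^ (m + 1) = Fintype.card (Cyclic p) * p ^ m := by rw [card_cyclic, pow_succ']
  rw [← map_pow, hexp, pow_card_mul_eq_ofLeft x hgen]
  rfl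

def z : WreathQuotient p m := central gen

lemma z_ne_one : (z : WreathQuotient p m) ≠ 1 := by
  rw [z, central_apply, Ne, mk_ofLeft_eq_one_iff]
  intro h
  apply gen_pow_ne_one (Fact.out : p.Prime).one_lt
  simpa [← pow_mul, pow_succ] using h.2 1

lemma z_mem_zpowers {u : WreathQuotient p m} (hright : rightQ u ≠ 1)
    (hprod : reduce (prodQ u) ≠ 1) : z ∈ zpowers u := by
  obtain ⟨x, rfl⟩ := mk_surjective u
  obtain ⟨k, hk⟩ := mem_zpowers_iff.mp (gen_mem_zpowers_of_reduce_ne_one Fact.out hprod)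
  rw [prodQ_mk] at hk
  have hz : z ∈ zpowers (mk x ^ p ^ (m + 1)) :=
    mem_zpowers_iff.mpr ⟨k, by rw [mk_pow_eq_central hright, ← map_zpow, hk, z]⟩
  exact zpowers_le.mpr (pow_mem (mem_zpowers _) _) hz

def a : WreathQuotient p m := mk (ofLeft (Pi.mulSingle 1 gen))

def t : WreathQuotient p m := mk (inl (Multiplicative.ofAdd 1))

lemma prodQ_a : prodQ (a : WreathQuotient p m) = gen := by
  simp [a]

lemma closure_a_t_eq_top : closure {(a : WreathQuotient p m), t} = ⊤ := by
  have h : closure {ofLeft (Pi.mulSingle 1 gen), inl (Multiplicative.ofAdd 1)} =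
      (⊤ : Subgroup (Wreath p m)) :=
    closure_ofLeft_mulSingle_inl_eq_top ZMod.mem_zpowers_ofAdd_one ZMod.mem_zpowers_ofAdd_one
  rw [a, t, ← Set.image_pair, ← MonoidHom.map_closure, h, map_top_of_surjective _ mk_surjective]

lemma z_mem_sigmaSet {x y : WreathQuotient p m} (hxy : closure {x, y} = ⊤) :
    z ∈ SigmaSet x y := by
  have ht : rightQ (t : WreathQuotient p m) ≠ 1 := by simp [t]
  have ha : reduce (prodQ (a : WreathQuotient p m)) ≠ 1 := by simp [prodQ_a, gen, reduce]
  obtain ⟨u, hu, hright, hprod⟩ := exists_mem_triple_map_ne_one_and_map_ne_one rightQ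
    (reduce.comp prodQ) (map_ne_one_of_closure_pair_eq_top hxy _ ht)
    (map_ne_one_of_closure_pair_eq_top hxy _ ha)
  exact mem_sigmaSet_of_mem_zpowers hu (z_mem_zpowers hright hprod)

lemma not_isBeauvilleGroup : ¬ IsBeauvilleGroup (WreathQuotient p m) :=
  not_isBeauvilleGroup_of_forall_mem_sigmaSet z_ne_one fun _ _ => z_mem_sigmaSet

lemma pow_exponent_eq_one (u : WreathQuotient p m) : u ^ p ^ (m + 2) = 1 := by
  obtain ⟨x, rfl⟩ := mk_surjective u
  by_cases hx : x.right = 1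
  · rw [← ofLeft_left_of_right_eq_one hx, ← map_pow, ← map_pow,
      show x.left ^ p ^ (m + 2) = 1 from funext fun _ => cyclic_pow_eq_one _, map_one, map_one]
  · rw [show mk x ^ p ^ (m + 2) = (mk x ^ p ^ (m + 1)) ^ p by rw [← pow_mul, ← pow_succ],
      mk_pow_eq_central hx, central_pow_prime]

lemma exponent_eq : Monoid.exponent (WreathQuotient p m) = p ^ (m + 2) := by
  refine Nat.dvd_antisymm (Monoid.exponent_dvd_of_forall_pow_eq_one pow_exponent_eq_one) ?_
  calc p ^ (m + 2) = orderOf (prodQ a) := by rw [prodQ_a, orderOf_gen]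
    _ ∣ orderOf a := orderOf_map_dvd _ _
    _ ∣ _ := Monoid.order_dvd_exponent _

lemma isPGroup : IsPGroup p (WreathQuotient p m) :=
  fun u => ⟨m + 2, pow_exponent_eq_one u⟩

lemma z_mem_powSubgroup : z ∈ powSubgroup (WreathQuotient p m) (p ^ (m + 1)) := by
  set x : Wreath p m := ofLeft (Pi.mulSingle 1 gen) * inl (Multiplicative.ofAdd 1)
  have hx : x.right ≠ 1 := by simp [x]
  have hprod : prodLeft x = gen := by simp [x]
  exact subset_closure ⟨mk x, (mk_pow_eq_central hx).trans (by rw [hprod, z])⟩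

lemma a_pow_notMem_zpowers_z : a ^ p ^ (m + 1) ∉ zpowers (z : WreathQuotient p m) := by
  intro h
  obtain ⟨k, hk⟩ := mem_zpowers_iff.mp h
  set c : Cyclic (p ^ (m + 2)) := (gen ^ k) ^ p ^ m
  set e : Cyclic (p ^ (m + 2)) := gen ^ p ^ (m + 1)
  have hz : (z : WreathQuotient p m) ^ k = mk (ofLeft fun _ => c) := by
    rw [z, ← map_zpow, central_apply]
  have ha : (a : WreathQuotient p m) ^ p ^ (m + 1) = mk (ofLeft (Pi.mulSingle 1 e)) := by
    rw [a, ← map_pow, ← map_pow, Pi.mulSingle_pow]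
  have h1 : mk (ofLeft ((fun _ => c) / Pi.mulSingle 1 e)) = 1 := by
    rw [map_div, map_div, ← hz, ← ha, hk, div_self']
  obtain ⟨hprod, hcoord⟩ := mk_ofLeft_eq_one_iff.mp h1
  -- at a coordinate other than `1` the entry is `c`, so `c ^ p = 1`; the product `c ^ p / e`
  -- then forces `e = 1`
  have hc : c ^ p = 1 := by simpa using hcoord (Multiplicative.ofAdd 1)
  apply gen_pow_ne_one (Fact.out : p.Prime).one_lt
  simpa [Finset.prod_div_distrib, hc, card_cyclic] using hprod

lemma sq_le_card_powSubgroup :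
    p ^ 2 ≤ Nat.card (powSubgroup (WreathQuotient p m) (p ^ (m + 1))) :=
  sq_le_card_of_notMem_zpowers isPGroup z_ne_one z_mem_powSubgroup
    (subset_closure ⟨a, rfl⟩) a_pow_notMem_zpowers_z

end WreathQuotient

theorem exists_large_non_beauville_group_with_large_power_subgroup_general
    {p : ℕ} (hp : p.Prime) (C : ℕ) :
    ∃ (G : Type) (_ : Group G), Finite G ∧ IsPGroup p G ∧
      (∃ a b : G, closure ({a, b} : Set G) = ⊤) ∧
      C < Nat.card G ∧
      ∃ e : ℕ, Monoid.exponent G = p ^ e ∧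
        p ^ 2 ≤ Nat.card (powSubgroup G (p ^ (e - 1))) ∧
        ¬ IsBeauvilleGroup G := by
  have : Fact p.Prime := ⟨hp⟩
  open WreathQuotient in
  refine ⟨WreathQuotient p C, inferInstance, inferInstance, isPGroup (m := C),
    ⟨a, t, closure_a_t_eq_top⟩, ?_, C + 2, exponent_eq, sq_le_card_powSubgroup,
    not_isBeauvilleGroup⟩
  calc C < p ^ C := Nat.lt_pow_self hp.one_lt
    _ < p ^ (C + 2) := Nat.pow_lt_pow_right hp.one_lt (by omega)
    _ ≤ Nat.card (WreathQuotient p C) := Nat.le_of_dvd Nat.card_pos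
      (WreathQuotient.exponent_eq (p := p) (m := C) ▸ Group.exponent_dvd_nat_card)

theorem exists_large_non_beauville_group_with_large_power_subgroup
    {p : ℕ} (hp : p.Prime) (hp5 : 5 ≤ p) (C : ℕ) (hC : 0 < C) :
    ∃ (G : Type) (_ : Group G), Finite G ∧ IsPGroup p G ∧
      (∃ a b : G, closure ({a, b} : Set G) = ⊤) ∧
      C < Nat.card G ∧
      ∃ e : ℕ, Monoid.exponent G = p ^ e ∧
        p ^ 2 ≤ Nat.card (powSubgroup G (p ^ (e - 1))) ∧
        ¬ IsBeauvilleGroup G :=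
  exists_large_non_beauville_group_with_large_power_subgroup_general hp C
end

section
/- Let G be a finite p-group, let x ∈ G \ Φ(G) be an element of order p, and let t ∈ Φ(G) be such that t ≠ [x, g] for every g ∈ G, where [x, g] = x^{-1} g^{-1} x g. Then (⋃_{g ∈ G} ⟨x⟩^g) ∩ (⋃_{g ∈ G} ⟨xt⟩^g) = {1}, i.e. no non-trivial element lies simultaneously in a conjugate of the cyclic subgroup ⟨x⟩ and in a conjugate of the cyclic subgroup ⟨xt⟩. -/
open Subgroup

/-- In a finite `p`-group, every commutator lies in the Frattini subgroup. -/
lemma commutator_mem_frattini_aux {p : ℕ} (hp : p.Prime) {G : Type*} [Group G] [Finite G]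
    (hpG : IsPGroup p G) (a b : G) : a * b * a⁻¹ * b⁻¹ ∈ frattini G := by
  have : Fact p.Prime := ⟨hp⟩
  haveI hnil : Group.IsNilpotent G := hpG.isNilpotent
  rw [frattini, Order.radical, Subgroup.mem_iInf]
  intro M
  rw [Subgroup.mem_iInf]
  intro hM
  haveI hMn : M.Normal := Subgroup.NormalizerCondition.normal_of_coatom M normalizerCondition_of_isNilpotent hM
  -- every subgroup of G ⧸ M is ⊥ or ⊤
  have hsub : ∀ K : Subgroup (G ⧸ M), K = ⊥ ∨ K = ⊤ := by
    intro K
    have hle : M ≤ K.comap (QuotientGroup.mk' M) := by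
      intro y hy
      rw [Subgroup.mem_comap]
      have h1 : (QuotientGroup.mk' M) y = 1 := (QuotientGroup.eq_one_iff y).mpr hy
      rw [h1]
      exact K.one_mem
    rcases eq_or_lt_of_le hle with heq | hlt
    · left
      have := congrArg (Subgroup.map (QuotientGroup.mk' M)) heq
      rw [Subgroup.map_comap_eq_self_of_surjective (QuotientGroup.mk'_surjective M)] at this
      rw [← this]
      ext z
      simp only [Subgroup.mem_map, Subgroup.mem_bot]
      constructor
      · rintro ⟨y, hy, rfl⟩
        exact (QuotientGroup.eq_one_iff y).mpr hy
      · rintro rfl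
        exact ⟨1, M.one_mem, rfl⟩
    · right
      have := hM.2 _ hlt
      have := congrArg (Subgroup.map (QuotientGroup.mk' M)) this
      rwa [Subgroup.map_comap_eq_self_of_surjective (QuotientGroup.mk'_surjective M),
        Subgroup.map_top_of_surjective _ (QuotientGroup.mk'_surjective M)] at this
  -- G ⧸ M is commutative
  have hcomm : ∀ u v : G ⧸ M, u * v = v * u := by
    intro u v
    rcases eq_or_ne u 1 with rfl | hu
    · simp
    · have : zpowers u = ⊤ := by
        rcases hsub (zpowers u) with h | h
        · exact absurd ((Subgroup.zpowers_eq_bot).mp h) hu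
        · exact h
      have hv : v ∈ zpowers u := this ▸ Subgroup.mem_top v
      obtain ⟨n, rfl⟩ := hv
      simpa using ((Commute.refl u).zpow_right n).eq
  have : ((a * b * a⁻¹ * b⁻¹ : G) : G ⧸ M) = 1 := by
    simp only [QuotientGroup.mk_mul, QuotientGroup.mk_inv]
    rw [hcomm (a : G ⧸ M) (b : G ⧸ M)]
    group
  exact (QuotientGroup.eq_one_iff _).mp this

theorem conjugates_of_cyclic_intersect_trivially
    {p : ℕ} (hp : p.Prime) (G : Type*) [Group G] [Finite G]
    (hpG : IsPGroup p G)
    (x : G) (hx : x ∉ frattini G) (hxo : orderOf x = p)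
    (t : G) (ht : t ∈ frattini G)
    (htc : ∀ g : G, t ≠ x⁻¹ * g⁻¹ * x * g) :
    (⋃ g : G, (zpowers (g * x * g⁻¹) : Set G)) ∩
      (⋃ g : G, (zpowers (g * (x * t) * g⁻¹) : Set G)) = {1} := by
  have hxp : x ^ p = 1 := by rw [← hxo]; exact pow_orderOf_eq_one x
  have hxpz : x ^ (p : ℤ) = 1 := by rw [zpow_natCast]; exact hxp
  have hppz : Prime (p : ℤ) := Nat.prime_iff_prime_int.mp hp
  -- image of x in G ⧸ frattini G
  set π : G →* G ⧸ frattini G := QuotientGroup.mk' (frattini G) with hπ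
  have hcommQ : ∀ a b : G, π a * π b = π b * π a := by
    intro a b
    have h := commutator_mem_frattini_aux hp hpG a b
    have : π (a * b * a⁻¹ * b⁻¹) = 1 := (QuotientGroup.eq_one_iff _).mpr h
    simp only [map_mul, map_inv] at this
    have := mul_eq_one_iff_eq_inv.mp this
    calc π a * π b = (π a * π b * (π a)⁻¹ * (π b)⁻¹) * (π b * π a) := by group
    _ = π b * π a := by rw [this]; group
  have hπx1 : π x ≠ 1 := fun h => hx ((QuotientGroup.eq_one_iff x).mp h)
  have hπt1 : π t = 1 := (QuotientGroup.eq_one_iff t).mpr ht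
  have hπxo : orderOf (π x) = p := by
    have hdvd : orderOf (π x) ∣ p := orderOf_dvd_of_pow_eq_one (by rw [← map_pow, hxp, map_one])
    rcases (Nat.Prime.eq_one_or_self_of_dvd hp _ hdvd) with h | h
    · exact absurd (orderOf_eq_one_iff.mp h) hπx1
    · exact h
  apply Set.eq_singleton_iff_unique_mem.mpr
  constructor
  · constructor
    · exact Set.mem_iUnion.mpr ⟨1, (zpowers _).one_mem⟩
    · exact Set.mem_iUnion.mpr ⟨1, (zpowers _).one_mem⟩
  · rintro y ⟨hy1, hy2⟩
    by_contra hy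
    obtain ⟨g, hg⟩ := Set.mem_iUnion.mp hy1
    obtain ⟨h, hh⟩ := Set.mem_iUnion.mp hy2
    obtain ⟨a, ha⟩ := hg
    obtain ⟨b, hb⟩ := hh
    change (g * x * g⁻¹) ^ a = y at ha
    change (h * (x * t) * h⁻¹) ^ b = y at hb
    rw [conj_zpow] at ha hb
    -- x ^ a ≠ 1
    have hxa : x ^ a ≠ 1 := by
      intro h0
      apply hy
      rw [← ha, h0, mul_one, mul_inv_cancel]
    have hpa : ¬ ((p : ℤ) ∣ a) := by
      intro hpa
      exact hxa (orderOf_dvd_iff_zpow_eq_one.mp (by rw [hxo]; exact hpa))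
    obtain ⟨u, v, huv⟩ := (hppz.coprime_iff_not_dvd.mpr hpa).symm
    -- x = (x ^ a) ^ u
    have h2 : x ^ (v * (p : ℤ)) = 1 := by rw [mul_comm, zpow_mul, hxpz, one_zpow]
    have hxau : (x ^ a) ^ u = x := by
      rw [← zpow_mul, mul_comm a u, ← mul_one (x ^ (u * a)), ← h2, ← zpow_add, huv, zpow_one]
    -- g x g⁻¹ = y ^ u ∈ zpowers (h (x t) h⁻¹)
    have hmem : g * x * g⁻¹ ∈ zpowers (h * (x * t) * h⁻¹) := by
      have : (h * (x * t) * h⁻¹) ^ (b * u) = g * x * g⁻¹ := by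
        rw [zpow_mul, conj_zpow, hb, ← ha, conj_zpow, hxau]
      exact ⟨b * u, this⟩
    obtain ⟨m, hm⟩ := hmem
    change (h * (x * t) * h⁻¹) ^ m = g * x * g⁻¹ at hm
    rw [conj_zpow] at hm
    set c : G := h⁻¹ * g with hc
    have hkey : (x * t) ^ m = c * x * c⁻¹ := by
      rw [hc]
      have := congrArg (fun z => h⁻¹ * z * h) hm
      rw [show h⁻¹ * (h * (x * t) ^ m * h⁻¹) * h = (x * t) ^ m by group] at this
      rw [this]; group
    -- pass to the quotient: π x = (π x) ^ m
    have hQ : (π x) ^ m = π x := by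
      have := congrArg π hkey
      simp only [map_zpow, map_mul, map_inv, hπt1, mul_one] at this
      calc (π x) ^ m = π c * π x * (π c)⁻¹ := this
      _ = π x * π c * (π c)⁻¹ := by rw [hcommQ c x]
      _ = π x := by group
    have hdvd1 : (p : ℤ) ∣ m - 1 := by
      rw [← hπxo]
      exact orderOf_dvd_iff_zpow_eq_one.mpr (by rw [zpow_sub, hQ, zpow_one, mul_inv_cancel])
    have hpm : ¬ ((p : ℤ) ∣ m) := by
      intro h0
      have hd1 : (p : ℤ) ∣ 1 := by
        have := dvd_sub h0 hdvd1
        simpa using this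
      have hle := Int.le_of_dvd one_pos hd1
      have h2p := hp.two_le
      omega
    -- x * t has p-power order
    obtain ⟨e, he⟩ := hpG (x * t)
    have hcop : IsCoprime m ((p : ℤ) ^ e) :=
      ((hppz.coprime_iff_not_dvd.mpr hpm).symm).pow_right
    obtain ⟨u', v', huv'⟩ := hcop
    have hxtpe : (x * t) ^ ((p : ℤ) ^ e) = 1 := by
      rw [← Nat.cast_pow, zpow_natCast, he]
    have h3 : (x * t) ^ (v' * (p : ℤ) ^ e) = 1 := by
      rw [mul_comm, zpow_mul, hxtpe, one_zpow]
    have hxt : x * t = c * x ^ u' * c⁻¹ := by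
      have hmu : ((x * t) ^ m) ^ u' = x * t := by
        rw [← zpow_mul, mul_comm m u', ← mul_one ((x * t) ^ (u' * m)), ← h3, ← zpow_add,
          huv', zpow_one]
      rw [← hmu, hkey, conj_zpow]
    -- pass to the quotient again
    have hQ2 : (π x) ^ u' = π x := by
      have := congrArg π hxt
      simp only [map_mul, map_zpow, map_inv, hπt1, mul_one] at this
      calc (π x) ^ u' = (π c)⁻¹ * (π c * (π x) ^ u' * (π c)⁻¹) * π c := by group
      _ = (π c)⁻¹ * (π x) * π c := by rw [← this]
      _ = (π c)⁻¹ * π c * π x := by rw [mul_assoc, hcommQ x c, ← mul_assoc]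
      _ = π x := by group
    have hdvd2 : (p : ℤ) ∣ u' - 1 := by
      rw [← hπxo]
      exact orderOf_dvd_iff_zpow_eq_one.mpr (by rw [zpow_sub, hQ2, zpow_one, mul_inv_cancel])
    obtain ⟨k, hk⟩ := hdvd2
    have hxu : x ^ u' = x := by
      have : u' = 1 + (p : ℤ) * k := by omega
      rw [this, zpow_add, zpow_one, zpow_mul, hxpz, one_zpow, mul_one]
    rw [hxu] at hxt
    -- contradiction with htc
    apply htc c⁻¹
    rw [inv_inv]
    rw [show x⁻¹ * c * x * c⁻¹ = x⁻¹ * (c * x * c⁻¹) by group, ← hxt]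
    group
end
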